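/- For the filter σ₂ ζ₂' = s − ζ₂, σ₁ ζ₁' = ζ₂ − ζ₁ with ramp input s(t) = a t + b (a, b ∈ ℝ, σ₁, σ₂ > 0), the output ζ := ζ₂ − ζ₁ converges to the constant a σ₁ as t → ∞. -/

import Mathlib

/-!
A first-order low-pass filter `σ x' = f - x` forgets its initial state: once `f ≤ c`, the
function `(x - c) e^{t/σ}` is antitone, so `x - c` is eventually below a decaying exponential
and `x` inherits the limit of `f`. Subtracting from `x` the input ramp delayed by `σ` gives
again such a filter, driven by the deviation of the input from the ramp. Hence `ζ₂` tracks
`a (t - σ₂) + b`, then `ζ₁` tracks `a (t - σ₂ - σ₁) + b`, and `ζ₂ - ζ₁ → a σ₁`.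
-/

open Filter Set Topology Real

namespace LowPass

variable {σ : ℝ} {f x : ℝ → ℝ}

theorem antitoneOn_sub_mul_exp (hσ : 0 ≤ σ) (hx : ∀ t, HasDerivAt x ((f t - x t) / σ) t)
    {c T : ℝ} (hf : ∀ t ≥ T, f t ≤ c) :
    AntitoneOn (fun t => (x t - c) * exp (t / σ)) (Ici T) := by
  have hderiv : ∀ t, HasDerivAt (fun t => (x t - c) * exp (t / σ))
      ((f t - c) / σ * exp (t / σ)) t := fun t => by
    have hexp := ((hasDerivAt_id' t).div_const σ).exp
    refine (((hx t).sub_const c).mul hexp).congr_deriv ?_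
    ring
  refine antitoneOn_of_hasDerivWithinAt_nonpos (convex_Ici T)
    (fun t _ => (hderiv t).continuousAt.continuousWithinAt)
    (fun t _ => (hderiv t).hasDerivWithinAt) fun t ht => ?_
  rw [interior_Ici] at ht
  have hfc : f t - c ≤ 0 := sub_nonpos.mpr (hf t (le_of_lt ht))
  exact mul_nonpos_of_nonpos_of_nonneg (div_nonpos_of_nonpos_of_nonneg hfc hσ) (exp_pos _).le

theorem eventually_lt (hσ : 0 < σ) (hx : ∀ t, HasDerivAt x ((f t - x t) / σ) t)
    {c d : ℝ} (hcd : c < d) (hf : ∀ᶠ t in atTop, f t ≤ c) : ∀ᶠ t in atTop, x t < d := by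
  obtain ⟨T, hT⟩ := eventually_atTop.mp hf
  have hanti := antitoneOn_sub_mul_exp hσ.le hx hT
  set g := (x T - c) * exp (T / σ)
  have hbound : ∀ t ≥ T, x t - c ≤ g * exp (-(t / σ)) := fun t ht => by
    have hle : (x t - c) * exp (t / σ) ≤ g := hanti self_mem_Ici (mem_Ici.mpr ht) ht
    rw [exp_neg, ← div_eq_mul_inv, le_div_iff₀ (exp_pos _)]
    exact hle
  have hdecay : Tendsto (fun t => g * exp (-(t / σ))) atTop (𝓝 0) := by
    simpa using (tendsto_exp_atBot.comp
      (tendsto_neg_atTop_atBot.comp (tendsto_id.atTop_div_const hσ))).const_mul g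
  filter_upwards [eventually_ge_atTop T, hdecay.eventually_lt_const (sub_pos.mpr hcd)]
    with t ht hsmall
  linarith [hbound t ht]

theorem tendsto (hσ : 0 < σ) (hx : ∀ t, HasDerivAt x ((f t - x t) / σ) t) {L : ℝ}
    (hf : Tendsto f atTop (𝓝 L)) : Tendsto x atTop (𝓝 L) := by
  have hneg : ∀ t, HasDerivAt (fun t => -x t) ((-f t - -x t) / σ) t := fun t =>
    (hx t).neg.congr_deriv (by ring)
  refine tendsto_order.mpr ⟨fun c hc => ?_, fun d hd => ?_⟩
  · obtain ⟨c', hcc', hc'L⟩ := exists_between hc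
    have hf' : ∀ᶠ t in atTop, -f t ≤ -c' :=
      (hf.eventually (lt_mem_nhds hc'L)).mono fun t ht => neg_le_neg ht.le
    exact (eventually_lt hσ hneg (neg_lt_neg hcc') hf').mono fun t ht => neg_lt_neg_iff.mp ht
  · obtain ⟨d', hLd', hd'd⟩ := exists_between hd
    exact eventually_lt hσ hx hd'd ((hf.eventually (gt_mem_nhds hLd')).mono fun t ht => ht.le)

theorem tendsto_sub_delayed_ramp (hσ : 0 < σ) (hx : ∀ t, HasDerivAt x ((f t - x t) / σ) t)
    {a b : ℝ} (hf : Tendsto (fun t => f t - (a * t + b)) atTop (𝓝 0)) :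
    Tendsto (fun t => x t - (a * (t - σ) + b)) atTop (𝓝 0) := by
  refine tendsto hσ (fun t => ?_) hf
  have hramp : HasDerivAt (fun t => a * (t - σ) + b) a t := by
    simpa using (((hasDerivAt_id t).sub_const σ).const_mul a).add_const b
  refine ((hx t).sub hramp).congr_deriv ?_
  field_simp
  ring

end LowPass

/-- Band-pass filter with ramp input `s t = a t + b`: the output `ζ = ζ₂ - ζ₁`
converges to the constant `a σ₁` as `t → ∞`. -/
theorem bandpass_ramp_input_output
    (σ₁ σ₂ a b : ℝ) (h1 : 0 < σ₁) (h2 : 0 < σ₂)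
    (ζ₁ ζ₂ : ℝ → ℝ)
    (hζ₂ : ∀ t, HasDerivAt ζ₂ (((a * t + b) - ζ₂ t) / σ₂) t)
    (hζ₁ : ∀ t, HasDerivAt ζ₁ ((ζ₂ t - ζ₁ t) / σ₁) t) :
    Filter.Tendsto (fun t => ζ₂ t - ζ₁ t) Filter.atTop (nhds (a * σ₁)) := by
  have htrack₂ : Tendsto (fun t => ζ₂ t - (a * (t - σ₂) + b)) atTop (𝓝 0) :=
    LowPass.tendsto_sub_delayed_ramp h2 hζ₂ (by simp)
  have htrack₁ : Tendsto (fun t => ζ₁ t - (a * (t - σ₁) + (b - a * σ₂))) atTop (𝓝 0) :=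
    LowPass.tendsto_sub_delayed_ramp h1 hζ₁ (htrack₂.congr fun t => by ring)
  simpa using ((htrack₂.sub htrack₁).add_const (a * σ₁)).congr fun t => by ring
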